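/- For the parametrized QP minimize (1/2)xᵀPx + q(θ)ᵀx subject to Ax ≤ b(θ) with P positive definite, if θ₁ and θ₂ both yield feasible problems with solutions x*(θ₁) and x*(θ₂) having the same active set 𝒜 satisfying LICQ and strict complementarity, then x* restricted to the segment [θ₁, θ₂] ... is affine whenever the active set remains 𝒜 on the segment; in particular x*(tθ₁ + (1−t)θ₂) = t x*(θ₁) + (1−t) x*(θ₂) for t ∈ [0,1] under this assumption. -/
import Mathlib


open Matrix

lemma qp_expand {n : ℕ} (P : Matrix (Fin n) (Fin n) ℝ) (hs : Pᵀ = P)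
    (q y d : Fin n → ℝ) :
    (1/2) * ((y + d) ⬝ᵥ P.mulVec (y + d)) + q ⬝ᵥ (y + d)
      = ((1/2) * (y ⬝ᵥ P.mulVec y) + q ⬝ᵥ y)
        + (P.mulVec y + q) ⬝ᵥ d + (1/2) * (d ⬝ᵥ P.mulVec d) := by
  have hsym : d ⬝ᵥ P.mulVec y = y ⬝ᵥ P.mulVec d := by
    rw [dotProduct_mulVec, ← vecMul_transpose, hs, dotProduct_comm]
  have h2 : P.mulVec y ⬝ᵥ d = y ⬝ᵥ P.mulVec d := by
    rw [dotProduct_comm, hsym]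
  simp only [mulVec_add, dotProduct_add, add_dotProduct]
  rw [hsym, h2]
  ring

lemma qp_stationary {n m : ℕ} (P : Matrix (Fin n) (Fin n) ℝ) (hs : Pᵀ = P)
    (hpsd : ∀ w : Fin n → ℝ, 0 ≤ w ⬝ᵥ P.mulVec w)
    (A : Matrix (Fin m) (Fin n) ℝ) (q b : _) (y : Fin n → ℝ) (𝒜 : Finset (Fin m))
    (hfeas : A.mulVec y ≤ b)
    (hmin : ∀ w, A.mulVec w ≤ b →
      (1/2) * (y ⬝ᵥ P.mulVec y) + q ⬝ᵥ y ≤ (1/2) * (w ⬝ᵥ P.mulVec w) + q ⬝ᵥ w)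
    (hact : ∀ i, i ∈ 𝒜 ↔ A i ⬝ᵥ y = b i)
    (d : Fin n → ℝ) (hd : ∀ i ∈ 𝒜, A i ⬝ᵥ d = 0) :
    (P.mulVec y + q) ⬝ᵥ d = 0 := by
  classical
  set a := (P.mulVec y + q) ⬝ᵥ d with ha
  set h := (1/2) * (d ⬝ᵥ P.mulVec d) with hh
  have hh0 : 0 ≤ h := by
    have := hpsd d; rw [hh]; linarith
  -- the slack function
  set s : Fin m → ℝ := fun i =>
    if A i ⬝ᵥ d = 0 then 1 else (b i - A.mulVec y i) / |A i ⬝ᵥ d| with hsdef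
  have hspos : ∀ i, 0 < s i := by
    intro i
    rw [hsdef]
    by_cases h0 : A i ⬝ᵥ d = 0
    · simp [h0]
    · simp only [h0, if_false]
      have hni : i ∉ 𝒜 := fun hi => h0 (hd i hi)
      have hlt : A.mulVec y i < b i := lt_of_le_of_ne (hfeas i)
        (fun he => hni ((hact i).2 he))
      exact div_pos (by linarith) (abs_pos.2 h0)
  set T : Finset ℝ := insert 1 (Finset.univ.image s) with hT
  have hTne : T.Nonempty := ⟨1, Finset.mem_insert_self _ _⟩
  set ε₀ := T.min' hTne with hε₀
  have hε₀pos : 0 < ε₀ := by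
    have hm := T.min'_mem hTne
    rw [← hε₀] at hm
    rw [hT] at hm
    rcases Finset.mem_insert.1 hm with h1 | h2
    · rw [h1]; norm_num
    · rcases Finset.mem_image.1 h2 with ⟨i, _, hi⟩
      rw [← hi]; exact hspos i
  have hε₀le : ∀ i, ε₀ ≤ s i := fun i =>
    Finset.min'_le _ _ (Finset.mem_insert_of_mem (Finset.mem_image_of_mem s (Finset.mem_univ i)))
  -- feasibility of perturbations
  have hfeas' : ∀ ε : ℝ, |ε| ≤ ε₀ → A.mulVec (y + ε • d) ≤ b := by
    intro ε hε i
    have hexp : A.mulVec (y + ε • d) i = A.mulVec y i + ε * (A i ⬝ᵥ d) := by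
      simp [mulVec_add, mulVec_smul, mulVec]
    rw [hexp]
    by_cases h0 : A i ⬝ᵥ d = 0
    · rw [h0]; simpa using hfeas i
    · have hsi : s i = (b i - A.mulVec y i) / |A i ⬝ᵥ d| := by rw [hsdef]; simp [h0]
      have habs : |ε * (A i ⬝ᵥ d)| ≤ b i - A.mulVec y i := by
        rw [abs_mul]
        calc |ε| * |A i ⬝ᵥ d| ≤ s i * |A i ⬝ᵥ d| := by
              apply mul_le_mul_of_nonneg_right (le_trans hε (hε₀le i)) (abs_nonneg _)
          _ = b i - A.mulVec y i := by
              rw [hsi, div_mul_cancel₀]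
              exact ne_of_gt (abs_pos.2 h0)
      have := abs_le.1 habs
      linarith [this.2]
  -- quadratic inequality
  have hquad : ∀ ε : ℝ, |ε| ≤ ε₀ → 0 ≤ ε * a + ε ^ 2 * h := by
    intro ε hε
    have := hmin (y + ε • d) (hfeas' ε hε)
    rw [qp_expand P hs q y (ε • d)] at this
    have e1 : (P.mulVec y + q) ⬝ᵥ (ε • d) = ε * a := by
      rw [dotProduct_smul, smul_eq_mul]
    have e2 : (1/2) * ((ε • d) ⬝ᵥ P.mulVec (ε • d)) = ε ^ 2 * h := by
      rw [smul_dotProduct, mulVec_smul, dotProduct_smul, hh]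
      simp [smul_eq_mul]; ring
    rw [e1, e2] at this
    linarith
  -- conclude a = 0
  have key : ∀ ε : ℝ, 0 < ε → ε ≤ ε₀ → |a| ≤ ε * h := by
    intro ε hpos hle
    have h1 := hquad ε (by rw [abs_of_pos hpos]; exact hle)
    have h2 := hquad (-ε) (by rw [abs_neg, abs_of_pos hpos]; exact hle)
    rw [abs_le]
    constructor <;> nlinarith
  by_contra hne
  have hapos : 0 < |a| := abs_pos.2 hne
  set ε := min ε₀ (|a| / (2 * h + 2)) with hε
  have hεpos : 0 < ε := lt_min hε₀pos (div_pos hapos (by linarith))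
  have := key ε hεpos (min_le_left _ _)
  have h2 : ε ≤ |a| / (2 * h + 2) := min_le_right _ _
  have : |a| ≤ |a| / (2 * h + 2) * h := le_trans this (mul_le_mul_of_nonneg_right h2 hh0)
  rw [div_mul_eq_mul_div, le_div_iff₀ (by linarith : (0:ℝ) < 2 * h + 2)] at this
  nlinarith

/-- For the parametrized QP with `P` positive definite, if the optimal active
set remains a fixed set `𝒜` (satisfying LICQ) along the segment `[θ₁, θ₂]`, then
the solution map is affine on the segment:
`x*(tθ₁ + (1−t)θ₂) = t x*(θ₁) + (1−t) x*(θ₂)` for `t ∈ [0,1]`. -/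
theorem qp_solution_affine_on_segment (n m p : ℕ)
    (P : Matrix (Fin n) (Fin n) ℝ)
    (A : Matrix (Fin m) (Fin n) ℝ)
    (u : Fin n → ℝ) (U : Matrix (Fin n) (Fin p) ℝ)
    (v : Fin m → ℝ) (V : Matrix (Fin m) (Fin p) ℝ)
    (hP : P.PosDef)
    (f : (Fin n → ℝ) → (Fin p → ℝ) → ℝ)
    (hf : ∀ x θ, f x θ = (1 / 2) * (x ⬝ᵥ P.mulVec x) + (u + U.mulVec θ) ⬝ᵥ x)
    (xstar : (Fin p → ℝ) → (Fin n → ℝ))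
    (θ₁ θ₂ : Fin p → ℝ)
    (𝒜 : Finset (Fin m))
    (hLICQ : LinearIndependent ℝ (fun i : 𝒜 => A i.1))
    (hopt : ∀ t : ℝ, t ∈ Set.Icc (0 : ℝ) 1 →
      A.mulVec (xstar (t • θ₁ + (1 - t) • θ₂)) ≤ v + V.mulVec (t • θ₁ + (1 - t) • θ₂) ∧
      (∀ y, A.mulVec y ≤ v + V.mulVec (t • θ₁ + (1 - t) • θ₂) →
        f (xstar (t • θ₁ + (1 - t) • θ₂)) (t • θ₁ + (1 - t) • θ₂) ≤
          f y (t • θ₁ + (1 - t) • θ₂)))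
    (hactive : ∀ t : ℝ, t ∈ Set.Icc (0 : ℝ) 1 → ∀ i : Fin m,
      i ∈ 𝒜 ↔ A i ⬝ᵥ xstar (t • θ₁ + (1 - t) • θ₂)
        = (v + V.mulVec (t • θ₁ + (1 - t) • θ₂)) i) :
    ∀ t : ℝ, t ∈ Set.Icc (0 : ℝ) 1 →
      xstar (t • θ₁ + (1 - t) • θ₂) = t • xstar θ₁ + (1 - t) • xstar θ₂ := by
  have hs : Pᵀ = P := hP.isHermitian
  have hpsd : ∀ w : Fin n → ℝ, 0 ≤ w ⬝ᵥ P.mulVec w := fun w =>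
    hP.posSemidef.re_dotProduct_nonneg w
  obtain ⟨hfeas1, hmin1⟩ := hopt 1 (by norm_num)
  obtain ⟨hfeas0, hmin0⟩ := hopt 0 (by norm_num)
  have hact1 := hactive 1 (by norm_num)
  have hact0 := hactive 0 (by norm_num)
  simp only [one_smul, sub_self, zero_smul, add_zero, sub_zero, zero_add]
    at hfeas1 hmin1 hact1 hfeas0 hmin0 hact0
  intro t ht
  obtain ⟨ht0, ht1⟩ := ht
  obtain ⟨hfeast, hmint⟩ := hopt t ⟨ht0, ht1⟩
  have hactt := hactive t ⟨ht0, ht1⟩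
  set θt : Fin p → ℝ := t • θ₁ + (1 - t) • θ₂ with hθt
  set x₁ := xstar θ₁ with hx₁
  set x₂ := xstar θ₂ with hx₂
  set y := xstar θt with hy
  set z : Fin n → ℝ := t • x₁ + (1 - t) • x₂ with hz
  -- affinity of b and q
  have hbaff : ∀ i, (v + V.mulVec θt) i
      = t * (v + V.mulVec θ₁) i + (1 - t) * (v + V.mulVec θ₂) i := by
    intro i
    simp only [hθt, mulVec_add, mulVec_smul, Pi.add_apply, Pi.smul_apply, smul_eq_mul]
    ring
  have hqaff : u + U.mulVec θt
      = t • (u + U.mulVec θ₁) + (1 - t) • (u + U.mulVec θ₂) := by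
    funext i
    simp only [hθt, mulVec_add, mulVec_smul, Pi.add_apply, Pi.smul_apply, smul_eq_mul]
    ring
  -- z is feasible at θt
  have hzfeas : A.mulVec z ≤ v + V.mulVec θt := by
    intro i
    have hzi : A.mulVec z i = t * A.mulVec x₁ i + (1 - t) * A.mulVec x₂ i := by
      simp [hz, mulVec_add, mulVec_smul]
    rw [hzi, hbaff i]
    have h1 := hfeas1 i
    have h2 := hfeas0 i
    have := mul_le_mul_of_nonneg_left h1 ht0
    have := mul_le_mul_of_nonneg_left h2 (by linarith : (0:ℝ) ≤ 1 - t)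
    linarith
  -- z satisfies equalities on the active set
  have hzact : ∀ i ∈ 𝒜, A i ⬝ᵥ z = (v + V.mulVec θt) i := by
    intro i hi
    have hzi : A i ⬝ᵥ z = t * (A i ⬝ᵥ x₁) + (1 - t) * (A i ⬝ᵥ x₂) := by
      simp [hz, dotProduct_add, dotProduct_smul, smul_eq_mul]
    rw [hzi, (hact1 i).1 hi, (hact0 i).1 hi, hbaff i]
  -- the difference
  set d : Fin n → ℝ := y - z with hd
  have hdA : ∀ i ∈ 𝒜, A i ⬝ᵥ d = 0 := by
    intro i hi
    rw [hd, dotProduct_sub, (hactt i).1 hi, hzact i hi, sub_self]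
  -- stationarity at endpoints
  have hmin1' : ∀ w, A.mulVec w ≤ v + V.mulVec θ₁ →
      (1/2) * (x₁ ⬝ᵥ P.mulVec x₁) + (u + U.mulVec θ₁) ⬝ᵥ x₁
        ≤ (1/2) * (w ⬝ᵥ P.mulVec w) + (u + U.mulVec θ₁) ⬝ᵥ w := by
    intro w hw
    have := hmin1 w hw
    rwa [hf, hf] at this
  have hmin0' : ∀ w, A.mulVec w ≤ v + V.mulVec θ₂ →
      (1/2) * (x₂ ⬝ᵥ P.mulVec x₂) + (u + U.mulVec θ₂) ⬝ᵥ x₂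
        ≤ (1/2) * (w ⬝ᵥ P.mulVec w) + (u + U.mulVec θ₂) ⬝ᵥ w := by
    intro w hw
    have := hmin0 w hw
    rwa [hf, hf] at this
  have ha₁ : (P.mulVec x₁ + (u + U.mulVec θ₁)) ⬝ᵥ d = 0 :=
    qp_stationary P hs hpsd A (u + U.mulVec θ₁) (v + V.mulVec θ₁) x₁ 𝒜
      hfeas1 hmin1' hact1 d hdA
  have ha₂ : (P.mulVec x₂ + (u + U.mulVec θ₂)) ⬝ᵥ d = 0 :=
    qp_stationary P hs hpsd A (u + U.mulVec θ₂) (v + V.mulVec θ₂) x₂ 𝒜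
      hfeas0 hmin0' hact0 d hdA
  -- stationarity at z
  have hgz : (P.mulVec z + (u + U.mulVec θt)) ⬝ᵥ d = 0 := by
    have hcomb : P.mulVec z + (u + U.mulVec θt)
        = t • (P.mulVec x₁ + (u + U.mulVec θ₁))
          + (1 - t) • (P.mulVec x₂ + (u + U.mulVec θ₂)) := by
      rw [hqaff, hz, mulVec_add, mulVec_smul, mulVec_smul]
      module
    rw [hcomb, add_dotProduct, smul_dotProduct, smul_dotProduct, ha₁, ha₂]
    simp
  -- compare objective values
  have hle : f y θt ≤ f z θt := hmint z hzfeas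
  rw [hf, hf] at hle
  have hexp := qp_expand P hs (u + U.mulVec θt) z d
  have hzd : z + d = y := by rw [hd]; abel
  rw [hzd, hgz] at hexp
  have hdPd : (0:ℝ) ≤ d ⬝ᵥ P.mulVec d := hpsd d
  have hdPd0 : d ⬝ᵥ P.mulVec d = 0 := by linarith
  have hd0 : d = 0 := by
    by_contra hne
    have h' : (0:ℝ) < d ⬝ᵥ P.mulVec d := hP.re_dotProduct_pos hne
    rw [hdPd0] at h'
    exact lt_irrefl 0 h'
  have : y = z := by
    have := sub_eq_zero.1 (hd ▸ hd0 : y - z = 0)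
    exact this
  rw [hy, hz, hx₁, hx₂] at this
  exact this
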